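/- arXiv:0801.1251 — 2 statements merged into one kernel-verified Lean document; each statement's English description precedes it below -/
import Mathlib

section
/- (Type Safety: Preservation) Write ⊢_w ⟨s,S,e⟩ : τ to mean atom(S) ∪ atom(e) ⊆ atom(s) = w and there is a type τ' with ∅ ⊢ S : τ' → τ and ∅ ⊢ e : τ'. If ⊢_w ⟨s,S,e⟩ : τ and ⟨s,S,e⟩ ⟶ ⟨s',S',e'⟩, then, writing w' = atom(s'), one has w ⊆ w' and ⊢_{w'} ⟨s',S',e'⟩ : τ. -/
set_option autoImplicit true

/-! ## Atoms and variables -/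

abbrev Atom : Type := ℕ

/-! ## Types over a set of data type symbols -/

inductive Ty (D : Type) : Type where
  | unit : Ty D
  | prod : Ty D → Ty D → Ty D
  | arrow : Ty D → Ty D → Ty D
  | data : D → Ty D
  | atm : Ty D
  | bnd : Ty D → Ty D

/-! ## Signatures: data types, constructors and observations -/

structure Sig : Type 1 where
  D : Type
  C : Type
  O : Type
  [finD : Fintype D]
  [finC : Fintype C]
  [finO : Fintype O]
  natD : D
  argTy : C → Ty D
  resTy : C → D
  zeroC : C
  succC : C
  zeroArg : argTy zeroC = Ty.unit
  zeroRes : resTy zeroC = natD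
  succArg : argTy succC = Ty.data natD
  succRes : resTy succC = natD
  arity : O → ℕ
  obsVal : O → List Atom → List Atom → ℕ
  eqO : O
  eqArity : arity eqO = 2
  eqSem : ∀ (s : List Atom) (a b : Atom),
    obsVal eqO s [a, b] = if a = b then 0 else 1

attribute [instance] Sig.finD Sig.finC Sig.finO

/-! ## Terms (de Bruijn representation; values are a sub-grammar cut out by `IsVal`) -/

inductive Tm (σ : Sig) : Type where
  | var : ℕ → Tm σ
  | unit : Tm σ
  | pair : Tm σ → Tm σ → Tm σ
  | fn : Tm σ → Tm σ          -- fun(f x = e); de Bruijn: var 0 = x, var 1 = f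
  | con : σ.C → Tm σ → Tm σ
  | atom : Atom → Tm σ
  | bindv : Tm σ → Tm σ → Tm σ -- atom binding ⟨⟨v₁⟩⟩v₂
  | lett : Tm σ → Tm σ → Tm σ  -- let x = e₁ in e₂; binds var 0 in e₂
  | fst : Tm σ → Tm σ
  | snd : Tm σ → Tm σ
  | app : Tm σ → Tm σ → Tm σ
  | case : Tm σ → (σ.C → Tm σ) → Tm σ -- match; each branch binds var 0
  | fresh : Tm σ
  | unbind : Tm σ → Tm σ
  | obs : (o : σ.O) → (Fin (σ.arity o) → Tm σ) → Tm σ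

inductive IsVal {σ : Sig} : Tm σ → Prop where
  | var : IsVal (Tm.var n)
  | unit : IsVal Tm.unit
  | pair : IsVal v₁ → IsVal v₂ → IsVal (Tm.pair v₁ v₂)
  | fn : IsVal (Tm.fn e)
  | con : IsVal v → IsVal (Tm.con c v)
  | atom : IsVal (Tm.atom a)
  | bindv : IsVal v₁ → IsVal v₂ → IsVal (Tm.bindv v₁ v₂)

/-! ## Renaming and substitution of variables -/

def upr (r : ℕ → ℕ) : ℕ → ℕ
  | 0 => 0
  | n + 1 => r n + 1

namespace Tm

variable {σ : Sig}

def renV : Tm σ → (ℕ → ℕ) → Tm σ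
  | .var n, r => .var (r n)
  | .unit, _ => .unit
  | .pair t₁ t₂, r => .pair (renV t₁ r) (renV t₂ r)
  | .fn e, r => .fn (renV e (upr (upr r)))
  | .con c t, r => .con c (renV t r)
  | .atom a, _ => .atom a
  | .bindv t₁ t₂, r => .bindv (renV t₁ r) (renV t₂ r)
  | .lett e₁ e₂, r => .lett (renV e₁ r) (renV e₂ (upr r))
  | .fst t, r => .fst (renV t r)
  | .snd t, r => .snd (renV t r)
  | .app t₁ t₂, r => .app (renV t₁ r) (renV t₂ r)
  | .case t br, r => .case (renV t r) (fun c => renV (br c) (upr r))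
  | .fresh, _ => .fresh
  | .unbind t, r => .unbind (renV t r)
  | .obs o args, r => .obs o (fun i => renV (args i) r)

def ups (ρ : ℕ → Tm σ) : ℕ → Tm σ
  | 0 => .var 0
  | n + 1 => renV (ρ n) Nat.succ

def subst : Tm σ → (ℕ → Tm σ) → Tm σ
  | .var n, ρ => ρ n
  | .unit, _ => .unit
  | .pair t₁ t₂, ρ => .pair (subst t₁ ρ) (subst t₂ ρ)
  | .fn e, ρ => .fn (subst e (ups (ups ρ)))
  | .con c t, ρ => .con c (subst t ρ)
  | .atom a, _ => .atom a
  | .bindv t₁ t₂, ρ => .bindv (subst t₁ ρ) (subst t₂ ρ)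
  | .lett e₁ e₂, ρ => .lett (subst e₁ ρ) (subst e₂ (ups ρ))
  | .fst t, ρ => .fst (subst t ρ)
  | .snd t, ρ => .snd (subst t ρ)
  | .app t₁ t₂, ρ => .app (subst t₁ ρ) (subst t₂ ρ)
  | .case t br, ρ => .case (subst t ρ) (fun c => subst (br c) (ups ρ))
  | .fresh, _ => .fresh
  | .unbind t, ρ => .unbind (subst t ρ)
  | .obs o args, ρ => .obs o (fun i => subst (args i) ρ)

/-- The substitution [v/x₀]. -/
def cons1 (v : Tm σ) : ℕ → Tm σ
  | 0 => v
  | n + 1 => .var n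

/-- The substitution [v/x₀, f/x₁]. -/
def cons2 (v f : Tm σ) : ℕ → Tm σ
  | 0 => v
  | 1 => f
  | n + 2 => .var n

/-- e[v/x] (single capture-avoiding substitution for the last-bound variable). -/
def subst1 (e v : Tm σ) : Tm σ := subst e (cons1 v)

/-- e[v/x, f/f'] (used for function application). -/
def subst2 (e v f : Tm σ) : Tm σ := subst e (cons2 v f)

/-! ## Atoms of a term, renaming/permuting atoms, observation symbols -/

def atoms : Tm σ → Finset Atom
  | .var _ => ∅
  | .unit => ∅
  | .pair t₁ t₂ => atoms t₁ ∪ atoms t₂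
  | .fn e => atoms e
  | .con _ t => atoms t
  | .atom a => {a}
  | .bindv t₁ t₂ => atoms t₁ ∪ atoms t₂
  | .lett e₁ e₂ => atoms e₁ ∪ atoms e₂
  | .fst t => atoms t
  | .snd t => atoms t
  | .app t₁ t₂ => atoms t₁ ∪ atoms t₂
  | .case t br => atoms t ∪ Finset.univ.biUnion (fun c => atoms (br c))
  | .fresh => ∅
  | .unbind t => atoms t
  | .obs _ args => Finset.univ.biUnion (fun i => atoms (args i))

def mapAtoms : Tm σ → (Atom → Atom) → Tm σ
  | .var n, _ => .var n
  | .unit, _ => .unit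
  | .pair t₁ t₂, f => .pair (mapAtoms t₁ f) (mapAtoms t₂ f)
  | .fn e, f => .fn (mapAtoms e f)
  | .con c t, f => .con c (mapAtoms t f)
  | .atom a, f => .atom (f a)
  | .bindv t₁ t₂, f => .bindv (mapAtoms t₁ f) (mapAtoms t₂ f)
  | .lett e₁ e₂, f => .lett (mapAtoms e₁ f) (mapAtoms e₂ f)
  | .fst t, f => .fst (mapAtoms t f)
  | .snd t, f => .snd (mapAtoms t f)
  | .app t₁ t₂, f => .app (mapAtoms t₁ f) (mapAtoms t₂ f)
  | .case t br, f => .case (mapAtoms t f) (fun c => mapAtoms (br c) f)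
  | .fresh, _ => .fresh
  | .unbind t, f => .unbind (mapAtoms t f)
  | .obs o args, f => .obs o (fun i => mapAtoms (args i) f)

/-- v[a := a'] : rename all occurrences of atom a to a'. -/
def renameAtom (t : Tm σ) (a a' : Atom) : Tm σ :=
  t.mapAtoms (fun b => if b = a then a' else b)

def obsSyms : Tm σ → Set σ.O
  | .var _ => ∅
  | .unit => ∅
  | .pair t₁ t₂ => obsSyms t₁ ∪ obsSyms t₂
  | .fn e => obsSyms e
  | .con _ t => obsSyms t
  | .atom _ => ∅
  | .bindv t₁ t₂ => obsSyms t₁ ∪ obsSyms t₂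
  | .lett e₁ e₂ => obsSyms e₁ ∪ obsSyms e₂
  | .fst t => obsSyms t
  | .snd t => obsSyms t
  | .app t₁ t₂ => obsSyms t₁ ∪ obsSyms t₂
  | .case t br => obsSyms t ∪ ⋃ c, obsSyms (br c)
  | .fresh => ∅
  | .unbind t => obsSyms t
  | .obs o args => insert o (⋃ i, obsSyms (args i))

end Tm

/-! ## Frame stacks -/

inductive Stk (σ : Sig) : Type where
  | id : Stk σ
  | cons : Stk σ → Tm σ → Stk σ  -- S∘(x.e); e binds var 0

namespace Stk

variable {σ : Sig}

def atoms : Stk σ → Finset Atom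
  | .id => ∅
  | .cons S e => atoms S ∪ e.atoms

def obsSyms : Stk σ → Set σ.O
  | .id => ∅
  | .cons S e => obsSyms S ∪ e.obsSyms

def mapAtoms : Stk σ → (Atom → Atom) → Stk σ
  | .id, _ => .id
  | .cons S e, f => .cons (mapAtoms S f) (e.mapAtoms f)

/-- S[e]: Id[e] = e, (S∘(x.e'))[e] = S[let x = e in e']. -/
def fill : Stk σ → Tm σ → Tm σ
  | .id, e => e
  | .cons S e', e => fill S (Tm.lett e e')

end Stk

/-! ## Numerals -/

def numeral (σ : Sig) : ℕ → Tm σ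
  | 0 => Tm.con σ.zeroC Tm.unit
  | n + 1 => Tm.con σ.succC (numeral σ n)

/-! ## Configurations -/

structure Config (σ : Sig) : Type where
  st : List Atom
  stk : Stk σ
  tm : Tm σ

/-! ## Typing -/

inductive HasTy (σ : Sig) : List (Ty σ.D) → Tm σ → Ty σ.D → Prop where
  | var (Γ : List (Ty σ.D)) (n : ℕ) (τ : Ty σ.D) :
      Γ[n]? = some τ → HasTy σ Γ (Tm.var n) τ
  | unit : HasTy σ Γ Tm.unit Ty.unit
  | pair : IsVal v₁ → IsVal v₂ → HasTy σ Γ v₁ τ₁ → HasTy σ Γ v₂ τ₂ →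
      HasTy σ Γ (Tm.pair v₁ v₂) (Ty.prod τ₁ τ₂)
  | fn : HasTy σ (τ :: Ty.arrow τ τ' :: Γ) e τ' →
      HasTy σ Γ (Tm.fn e) (Ty.arrow τ τ')
  | con : IsVal v → HasTy σ Γ v (σ.argTy c) →
      HasTy σ Γ (Tm.con c v) (Ty.data (σ.resTy c))
  | atom : HasTy σ Γ (Tm.atom a) Ty.atm
  | bindv : IsVal v₁ → IsVal v₂ → HasTy σ Γ v₁ Ty.atm → HasTy σ Γ v₂ τ →
      HasTy σ Γ (Tm.bindv v₁ v₂) (Ty.bnd τ)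
  | lett : HasTy σ Γ e₁ τ → HasTy σ (τ :: Γ) e₂ τ' →
      HasTy σ Γ (Tm.lett e₁ e₂) τ'
  | fst : IsVal v → HasTy σ Γ v (Ty.prod τ₁ τ₂) → HasTy σ Γ (Tm.fst v) τ₁
  | snd : IsVal v → HasTy σ Γ v (Ty.prod τ₁ τ₂) → HasTy σ Γ (Tm.snd v) τ₂
  | app : IsVal v₁ → IsVal v₂ → HasTy σ Γ v₁ (Ty.arrow τ τ') → HasTy σ Γ v₂ τ →
      HasTy σ Γ (Tm.app v₁ v₂) τ'
  | case (br : σ.C → Tm σ) : IsVal v → HasTy σ Γ v (Ty.data δ) →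
      (∀ c, σ.resTy c = δ → HasTy σ (σ.argTy c :: Γ) (br c) τ) →
      HasTy σ Γ (Tm.case v br) τ
  | fresh : HasTy σ Γ Tm.fresh Ty.atm
  | unbind : IsVal v → HasTy σ Γ v (Ty.bnd τ) →
      HasTy σ Γ (Tm.unbind v) (Ty.prod Ty.atm τ)
  | obs (o : σ.O) (args : Fin (σ.arity o) → Tm σ) :
      (∀ i, IsVal (args i)) → (∀ i, HasTy σ Γ (args i) Ty.atm) →
      HasTy σ Γ (Tm.obs o args) (Ty.data σ.natD)

inductive HasTyStk (σ : Sig) : List (Ty σ.D) → Stk σ → Ty σ.D → Ty σ.D → Prop where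
  | id : HasTyStk σ Γ Stk.id τ τ
  | cons : HasTy σ (τ :: Γ) e τ' → HasTyStk σ Γ S τ' τ'' →
      HasTyStk σ Γ (Stk.cons S e) τ τ''

/-! ## The transition relation -/

inductive Step (σ : Sig) : Config σ → Config σ → Prop where
  | pop : IsVal v →
      Step σ ⟨s, Stk.cons S e, v⟩ ⟨s, S, e.subst1 v⟩
  | lett :
      Step σ ⟨s, S, Tm.lett e₁ e₂⟩ ⟨s, Stk.cons S e₂, e₁⟩
  | case (br : σ.C → Tm σ) : IsVal v →
      Step σ ⟨s, S, Tm.case (Tm.con c v) br⟩ ⟨s, S, (br c).subst1 v⟩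
  | fst : IsVal v₁ → IsVal v₂ →
      Step σ ⟨s, S, Tm.fst (Tm.pair v₁ v₂)⟩ ⟨s, S, v₁⟩
  | snd : IsVal v₁ → IsVal v₂ →
      Step σ ⟨s, S, Tm.snd (Tm.pair v₁ v₂)⟩ ⟨s, S, v₂⟩
  | app : IsVal v →
      Step σ ⟨s, S, Tm.app (Tm.fn e) v⟩ ⟨s, S, e.subst2 v (Tm.fn e)⟩
  | fresh : a' ∉ s →
      Step σ ⟨s, S, Tm.fresh⟩ ⟨s ++ [a'], S, Tm.atom a'⟩
  | unbind : a' ∉ s → IsVal v →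
      Step σ ⟨s, S, Tm.unbind (Tm.bindv (Tm.atom a) v)⟩
             ⟨s ++ [a'], S, Tm.pair (Tm.atom a') (v.renameAtom a a')⟩
  | obs (o : σ.O) (as : Fin (σ.arity o) → Atom) :
      (∀ i, as i ∈ s) →
      Step σ ⟨s, S, Tm.obs o (fun i => Tm.atom (as i))⟩
             ⟨s, S, numeral σ (σ.obsVal o s (List.ofFn as))⟩

/-! ## Termination -/

inductive TermN (σ : Sig) : Config σ → ℕ → Prop where
  | val : IsVal v → TermN σ ⟨s, Stk.id, v⟩ 0
  | step : Step σ c c' → TermN σ c' n → TermN σ c (n + 1)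

def Term (σ : Sig) (c : Config σ) : Prop := ∃ n, TermN σ c n

/-! ## Equivariance and affineness of observations -/

def ObsEquivariant (σ : Sig) : Prop :=
  ∀ (π : Equiv.Perm Atom), {a : Atom | π a ≠ a}.Finite →
    ∀ (o : σ.O) (s as : List Atom),
      s.Nodup → as.length = σ.arity o → (∀ a ∈ as, a ∈ s) →
      σ.obsVal o s as = σ.obsVal o (s.map ⇑π) (as.map ⇑π)

def AffineObs (σ : Sig) (o : σ.O) : Prop :=
  ∀ (s : List Atom) (a' : Atom) (as : List Atom),
    s.Nodup → a' ∉ s → as.length = σ.arity o → (∀ a ∈ as, a ∈ s) →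
    σ.obsVal o (a' :: s) as = σ.obsVal o s as

/-! ## Operational equivalence of closed expressions, and contextual equivalence -/

def OpEq (σ : Sig) (w : Finset Atom) (e e' : Tm σ) (τ : Ty σ.D) : Prop :=
  e.atoms ∪ e'.atoms ⊆ w ∧ HasTy σ [] e τ ∧ HasTy σ [] e' τ ∧
  ∀ (s : List Atom) (S : Stk σ) (τ' : Ty σ.D),
    s.Nodup → w ∪ S.atoms ⊆ s.toFinset → HasTyStk σ [] S τ τ' →
    (Term σ ⟨s, S, e⟩ ↔ Term σ ⟨s, S, e'⟩)

/-- A closing substitution for context Γ with atoms in w. -/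
def ClosingSubst (σ : Sig) (Γ : List (Ty σ.D)) (w : Finset Atom) (vs : ℕ → Tm σ) : Prop :=
  ∀ i τ, Γ[i]? = some τ → IsVal (vs i) ∧ HasTy σ [] (vs i) τ ∧ (vs i).atoms ⊆ w

def CtxEq (σ : Sig) (Γ : List (Ty σ.D)) (w : Finset Atom) (e e' : Tm σ) (τ : Ty σ.D) : Prop :=
  e.atoms ∪ e'.atoms ⊆ w ∧ HasTy σ Γ e τ ∧ HasTy σ Γ e' τ ∧
  ∀ (w' : Finset Atom) (vs : ℕ → Tm σ), w ⊆ w' → ClosingSubst σ Γ w' vs →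
    OpEq σ w' (e.subst vs) (e'.subst vs) τ

/-! ## Expression relations -/

def ExprRel (σ : Sig) : Type :=
  List (Ty σ.D) → Finset Atom → Tm σ → Tm σ → Ty σ.D → Prop

def IsExprRel (σ : Sig) (R : ExprRel σ) : Prop :=
  ∀ Γ w e e' τ, R Γ w e e' τ →
    e.atoms ∪ e'.atoms ⊆ w ∧ HasTy σ Γ e τ ∧ HasTy σ Γ e' τ

/-- Compatible refinement ℰ̂ of an expression relation ℰ. -/
inductive CompRef (σ : Sig) (R : ExprRel σ) :
    List (Ty σ.D) → Finset Atom → Tm σ → Tm σ → Ty σ.D → Prop where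
  | var (Γ : List (Ty σ.D)) (n : ℕ) (τ : Ty σ.D) :
      Γ[n]? = some τ → CompRef σ R Γ w (Tm.var n) (Tm.var n) τ
  | unit : CompRef σ R Γ w Tm.unit Tm.unit Ty.unit
  | pair : IsVal v₁ → IsVal v₂ → IsVal v₁' → IsVal v₂' →
      R Γ w v₁ v₁' τ₁ → R Γ w v₂ v₂' τ₂ →
      CompRef σ R Γ w (Tm.pair v₁ v₂) (Tm.pair v₁' v₂') (Ty.prod τ₁ τ₂)
  | fn : R (τ :: Ty.arrow τ τ' :: Γ) w e e' τ' →
      CompRef σ R Γ w (Tm.fn e) (Tm.fn e') (Ty.arrow τ τ')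
  | con : IsVal v → IsVal v' → R Γ w v v' (σ.argTy c) →
      CompRef σ R Γ w (Tm.con c v) (Tm.con c v') (Ty.data (σ.resTy c))
  | atom : a ∈ w → CompRef σ R Γ w (Tm.atom a) (Tm.atom a) Ty.atm
  | bindv : IsVal v₁ → IsVal v₂ → IsVal v₁' → IsVal v₂' →
      R Γ w v₁ v₁' Ty.atm → R Γ w v₂ v₂' τ →
      CompRef σ R Γ w (Tm.bindv v₁ v₂) (Tm.bindv v₁' v₂') (Ty.bnd τ)
  | lett : R Γ w e₁ e₁' τ → R (τ :: Γ) w e₂ e₂' τ' →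
      CompRef σ R Γ w (Tm.lett e₁ e₂) (Tm.lett e₁' e₂') τ'
  | fst : IsVal v → IsVal v' → R Γ w v v' (Ty.prod τ₁ τ₂) →
      CompRef σ R Γ w (Tm.fst v) (Tm.fst v') τ₁
  | snd : IsVal v → IsVal v' → R Γ w v v' (Ty.prod τ₁ τ₂) →
      CompRef σ R Γ w (Tm.snd v) (Tm.snd v') τ₂
  | app : IsVal v₁ → IsVal v₂ → IsVal v₁' → IsVal v₂' →
      R Γ w v₁ v₁' (Ty.arrow τ τ') → R Γ w v₂ v₂' τ →
      CompRef σ R Γ w (Tm.app v₁ v₂) (Tm.app v₁' v₂') τ'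
  | case (br br' : σ.C → Tm σ) : IsVal v → IsVal v' → R Γ w v v' (Ty.data δ) →
      (∀ c, σ.resTy c = δ → R (σ.argTy c :: Γ) w (br c) (br' c) τ) →
      CompRef σ R Γ w (Tm.case v br) (Tm.case v' br') τ
  | fresh : CompRef σ R Γ w Tm.fresh Tm.fresh Ty.atm
  | unbind : IsVal v → IsVal v' → R Γ w v v' (Ty.bnd τ) →
      CompRef σ R Γ w (Tm.unbind v) (Tm.unbind v') (Ty.prod Ty.atm τ)
  | obs (o : σ.O) (args args' : Fin (σ.arity o) → Tm σ) :
      (∀ i, IsVal (args i)) → (∀ i, IsVal (args' i)) →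
      (∀ i, R Γ w (args i) (args' i) Ty.atm) →
      CompRef σ R Γ w (Tm.obs o args) (Tm.obs o args') (Ty.data σ.natD)

/-- Compatible refinement extended to frame stacks. -/
inductive StkRef (σ : Sig) (R : ExprRel σ) :
    List (Ty σ.D) → Finset Atom → Stk σ → Stk σ → Ty σ.D → Ty σ.D → Prop where
  | id : StkRef σ R Γ w Stk.id Stk.id τ τ
  | cons : R (τ :: Γ) w e e' τ' → StkRef σ R Γ w S S' τ' τ'' →
      StkRef σ R Γ w (Stk.cons S e) (Stk.cons S' e') τ τ''

/-! ## Properties of expression relations -/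

def RelRefl (σ : Sig) (R : ExprRel σ) : Prop :=
  ∀ Γ w (e : Tm σ) τ, e.atoms ⊆ w → HasTy σ Γ e τ → R Γ w e e τ

def RelSymm (σ : Sig) (R : ExprRel σ) : Prop :=
  ∀ Γ w e e' τ, R Γ w e e' τ → R Γ w e' e τ

def RelTrans (σ : Sig) (R : ExprRel σ) : Prop :=
  ∀ Γ w e e' e'' τ, R Γ w e e' τ → R Γ w e' e'' τ → R Γ w e e'' τ

def RelCompat (σ : Sig) (R : ExprRel σ) : Prop :=
  ∀ Γ w e e' τ, CompRef σ R Γ w e e' τ → R Γ w e e' τ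

def RelSubst (σ : Sig) (R : ExprRel σ) : Prop :=
  ∀ Γ w (v v' : Tm σ) τ e e' τ', IsVal v → IsVal v' →
    R Γ w v v' τ → R (τ :: Γ) w e e' τ' →
    R Γ w (e.subst1 v) (e'.subst1 v') τ'

def RelEquivariant (σ : Sig) (R : ExprRel σ) : Prop :=
  ∀ (π : Equiv.Perm Atom), {a : Atom | π a ≠ a}.Finite →
    ∀ Γ w (e e' : Tm σ) τ, R Γ w e e' τ →
      R Γ (w.image ⇑π) (e.mapAtoms ⇑π) (e'.mapAtoms ⇑π) τ

def RelAdequate (σ : Sig) (R : ExprRel σ) : Prop :=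
  ∀ w e e' τ, R [] w e e' τ → OpEq σ w e e' τ

/-! ## The Howe relation (least relation closed under the Howe rule) -/

def Howe (σ : Sig) : ExprRel σ := fun Γ w e e'' τ =>
  ∀ R : ExprRel σ,
    (∀ Γ' w' a c τ',
      (∃ b, CompRef σ R Γ' w' a b τ' ∧ CtxEq σ Γ' w' b c τ') → R Γ' w' a c τ') →
    R Γ w e e'' τ

/-! ## Nominal arities and α-equivalence -/

inductive NominalArity (σ : Sig) : Ty σ.D → Prop where
  | unit : NominalArity σ Ty.unit
  | prod : NominalArity σ t₁ → NominalArity σ t₂ → NominalArity σ (Ty.prod t₁ t₂)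
  | data (d : σ.D) : NominalArity σ (Ty.data d)
  | atm : NominalArity σ Ty.atm
  | bnd : NominalArity σ t → NominalArity σ (Ty.bnd t)

inductive AlphaEq (σ : Sig) : Finset Atom → Tm σ → Tm σ → Ty σ.D → Prop where
  | unit : AlphaEq σ w Tm.unit Tm.unit Ty.unit
  | pair : AlphaEq σ w v₁ v₁' a₁ → AlphaEq σ w v₂ v₂' a₂ →
      AlphaEq σ w (Tm.pair v₁ v₂) (Tm.pair v₁' v₂') (Ty.prod a₁ a₂)
  | con : AlphaEq σ w v v' (σ.argTy c) →
      AlphaEq σ w (Tm.con c v) (Tm.con c v') (Ty.data (σ.resTy c))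
  | atom : a ∈ w → AlphaEq σ w (Tm.atom a) (Tm.atom a) Ty.atm
  | bindv (a a' a'' : Atom) (v v' : Tm σ) : a'' ∉ w →
      insert a (insert a' (v.atoms ∪ v'.atoms)) ⊆ w →
      AlphaEq σ (insert a'' w) (v.renameAtom a a'') (v'.renameAtom a' a'') ar →
      AlphaEq σ w (Tm.bindv (Tm.atom a) v) (Tm.bindv (Tm.atom a') v') (Ty.bnd ar)

/-! ## Well-typed configurations -/

def ConfigTy (σ : Sig) (w : Finset Atom) (c : Config σ) (τ : Ty σ.D) : Prop :=
  c.st.Nodup ∧ c.stk.atoms ∪ c.tm.atoms ⊆ c.st.toFinset ∧ c.st.toFinset = w ∧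
  ∃ τ', HasTyStk σ [] c.stk τ' τ ∧ HasTy σ [] c.tm τ'

section PreservationAux

variable {σ : Sig}

open Tm

theorem isVal_renV {t : Tm σ} (h : IsVal t) : ∀ r, IsVal (t.renV r) := by
  induction h with
  | var => exact fun _ => .var
  | unit => exact fun _ => .unit
  | pair _ _ ih1 ih2 => exact fun r => .pair (ih1 r) (ih2 r)
  | fn => exact fun _ => .fn
  | con _ ih => exact fun r => .con (ih r)
  | atom => exact fun _ => .atom
  | bindv _ _ ih1 ih2 => exact fun r => .bindv (ih1 r) (ih2 r)

theorem isVal_ups {ρ : ℕ → Tm σ} (h : ∀ n, IsVal (ρ n)) : ∀ n, IsVal (ups ρ n) := by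
  intro n; cases n with
  | zero => exact .var
  | succ m => exact isVal_renV (h m) _

theorem isVal_subst {t : Tm σ} (h : IsVal t) :
    ∀ ρ, (∀ n, IsVal (ρ n)) → IsVal (t.subst ρ) := by
  induction h with
  | var => exact fun ρ hρ => hρ _
  | unit => exact fun _ _ => .unit
  | pair _ _ ih1 ih2 => exact fun ρ hρ => .pair (ih1 ρ hρ) (ih2 ρ hρ)
  | fn => exact fun _ _ => .fn
  | con _ ih => exact fun ρ hρ => .con (ih ρ hρ)
  | atom => exact fun _ _ => .atom
  | bindv _ _ ih1 ih2 => exact fun ρ hρ => .bindv (ih1 ρ hρ) (ih2 ρ hρ)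

theorem atoms_renV (t : Tm σ) : ∀ r, (t.renV r).atoms = t.atoms := by
  induction t <;> intro r <;> simp [Tm.renV, Tm.atoms, *]

theorem atoms_ups {ρ : ℕ → Tm σ} {A : Finset Atom} (h : ∀ n, (ρ n).atoms ⊆ A) :
    ∀ n, (ups ρ n).atoms ⊆ A := by
  intro n; cases n with
  | zero => simp [ups, Tm.atoms]
  | succ m => rw [ups, atoms_renV]; exact h m

private theorem auxU {s1 s2 a1 a2 A : Finset Atom} (h1 : s1 ⊆ a1 ∪ A) (h2 : s2 ⊆ a2 ∪ A) :
    s1 ∪ s2 ⊆ (a1 ∪ a2) ∪ A := by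
  intro x hx
  simp only [Finset.mem_union] at *
  rcases hx with h | h
  · rcases Finset.mem_union.1 (h1 h) with h | h <;> tauto
  · rcases Finset.mem_union.1 (h2 h) with h | h <;> tauto

theorem atoms_subst (t : Tm σ) : ∀ (ρ : ℕ → Tm σ) (A : Finset Atom),
    (∀ n, (ρ n).atoms ⊆ A) → (t.subst ρ).atoms ⊆ t.atoms ∪ A := by
  induction t with
  | var n => intro ρ A h; exact (h n).trans Finset.subset_union_right
  | unit => intro ρ A h; simp [Tm.subst, Tm.atoms]
  | pair t1 t2 ih1 ih2 => intro ρ A h; exact auxU (ih1 ρ A h) (ih2 ρ A h)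
  | fn e ih => intro ρ A h; exact ih _ A (atoms_ups (atoms_ups h))
  | con c t ih => intro ρ A h; exact ih ρ A h
  | atom a => intro ρ A h; simp [Tm.subst, Tm.atoms]
  | bindv t1 t2 ih1 ih2 => intro ρ A h; exact auxU (ih1 ρ A h) (ih2 ρ A h)
  | lett e1 e2 ih1 ih2 => intro ρ A h; exact auxU (ih1 ρ A h) (ih2 _ A (atoms_ups h))
  | fst t ih => intro ρ A h; exact ih ρ A h
  | snd t ih => intro ρ A h; exact ih ρ A h
  | app t1 t2 ih1 ih2 => intro ρ A h; exact auxU (ih1 ρ A h) (ih2 ρ A h)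
  | case t br iht ihbr =>
      intro ρ A h
      refine auxU (iht ρ A h) (Finset.biUnion_subset.2 fun c _ => ?_)
      refine (ihbr c _ A (atoms_ups h)).trans ?_
      intro x hx
      simp only [Finset.mem_union] at *
      rcases hx with h' | h'
      · exact Or.inl (Finset.mem_biUnion.2 ⟨c, Finset.mem_univ c, h'⟩)
      · exact Or.inr h'
  | fresh => intro ρ A h; simp [Tm.subst, Tm.atoms]
  | unbind t ih => intro ρ A h; exact ih ρ A h
  | obs o args ih =>
      intro ρ A h
      show Finset.biUnion _ _ ⊆ _
      refine Finset.biUnion_subset.2 fun i _ => (ih i ρ A h).trans ?_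
      intro x hx
      simp only [Finset.mem_union] at *
      rcases hx with h' | h'
      · exact Or.inl (Finset.mem_biUnion.2 ⟨i, Finset.mem_univ i, h'⟩)
      · exact Or.inr h'

theorem atoms_cons1 {v : Tm σ} : ∀ n, (cons1 v n).atoms ⊆ v.atoms := by
  intro n; cases n <;> simp [cons1, Tm.atoms]

theorem atoms_subst1 (e v : Tm σ) : (e.subst1 v).atoms ⊆ e.atoms ∪ v.atoms :=
  atoms_subst e _ _ atoms_cons1

theorem atoms_cons2 {v f : Tm σ} : ∀ n, (cons2 v f n).atoms ⊆ v.atoms ∪ f.atoms := by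
  intro n
  match n with
  | 0 => exact Finset.subset_union_left
  | 1 => exact Finset.subset_union_right
  | (m+2) => simp [cons2, Tm.atoms]

theorem atoms_subst2 (e v f : Tm σ) : (e.subst2 v f).atoms ⊆ e.atoms ∪ (v.atoms ∪ f.atoms) :=
  atoms_subst e _ _ atoms_cons2

theorem upr_ok {Γ Δ : List (Ty σ.D)} {r : ℕ → ℕ} {τ : Ty σ.D}
    (hr : ∀ n τ₀, Γ[n]? = some τ₀ → Δ[r n]? = some τ₀) :
    ∀ n τ₀, (τ :: Γ)[n]? = some τ₀ → (τ :: Δ)[upr r n]? = some τ₀ := by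
  intro n τ₀ hn
  cases n with
  | zero =>
      simp only [List.getElem?_cons_zero, Option.some_inj] at hn
      subst hn
      show (τ :: Δ)[0]? = some τ
      simp
  | succ m =>
      show (τ :: Δ)[r m + 1]? = some τ₀
      simp only [List.getElem?_cons_succ] at *
      exact hr m τ₀ hn

theorem hasTy_renV {Γ : List (Ty σ.D)} {t : Tm σ} {τ : Ty σ.D} (h : HasTy σ Γ t τ) :
    ∀ Δ (r : ℕ → ℕ), (∀ n τ₀, Γ[n]? = some τ₀ → Δ[r n]? = some τ₀) →
      HasTy σ Δ (t.renV r) τ := by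
  induction h with
  | var Γ n τ hn => exact fun Δ r hr => .var _ _ _ (hr n τ hn)
  | unit => exact fun _ _ _ => .unit
  | pair hv1 hv2 _ _ ih1 ih2 =>
      exact fun Δ r hr => .pair (isVal_renV hv1 r) (isVal_renV hv2 r) (ih1 Δ r hr) (ih2 Δ r hr)
  | fn _ ih => exact fun Δ r hr => .fn (ih _ _ (upr_ok (upr_ok hr)))
  | con hv _ ih => exact fun Δ r hr => .con (isVal_renV hv r) (ih Δ r hr)
  | atom => exact fun _ _ _ => .atom
  | bindv hv1 hv2 _ _ ih1 ih2 =>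
      exact fun Δ r hr => .bindv (isVal_renV hv1 r) (isVal_renV hv2 r) (ih1 Δ r hr) (ih2 Δ r hr)
  | lett _ _ ih1 ih2 => exact fun Δ r hr => .lett (ih1 Δ r hr) (ih2 _ _ (upr_ok hr))
  | fst hv _ ih => exact fun Δ r hr => .fst (isVal_renV hv r) (ih Δ r hr)
  | snd hv _ ih => exact fun Δ r hr => .snd (isVal_renV hv r) (ih Δ r hr)
  | app hv1 hv2 _ _ ih1 ih2 =>
      exact fun Δ r hr => .app (isVal_renV hv1 r) (isVal_renV hv2 r) (ih1 Δ r hr) (ih2 Δ r hr)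
  | case br hv _ _ ihv ihbr =>
      exact fun Δ r hr => .case _ (isVal_renV hv r) (ihv Δ r hr)
        (fun c hc => ihbr c hc _ _ (upr_ok hr))
  | fresh => exact fun _ _ _ => .fresh
  | unbind hv _ ih => exact fun Δ r hr => .unbind (isVal_renV hv r) (ih Δ r hr)
  | obs o args hv _ ih =>
      exact fun Δ r hr => .obs o _ (fun i => isVal_renV (hv i) r) (fun i => ih i Δ r hr)

theorem ups_ok {Γ Δ : List (Ty σ.D)} {ρ : ℕ → Tm σ} {τ : Ty σ.D}
    (hρ : ∀ n τ₀, Γ[n]? = some τ₀ → HasTy σ Δ (ρ n) τ₀) :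
    ∀ n τ₀, (τ :: Γ)[n]? = some τ₀ → HasTy σ (τ :: Δ) (ups ρ n) τ₀ := by
  intro n τ₀ hn
  cases n with
  | zero =>
      simp only [List.getElem?_cons_zero, Option.some_inj] at hn
      subst hn
      exact .var _ _ _ (by simp)
  | succ m =>
      simp only [List.getElem?_cons_succ] at hn
      exact hasTy_renV (hρ m τ₀ hn) _ Nat.succ (fun k τ₁ hk => by simpa using hk)

theorem hasTy_subst {Γ : List (Ty σ.D)} {t : Tm σ} {τ : Ty σ.D} (h : HasTy σ Γ t τ) :
    ∀ Δ (ρ : ℕ → Tm σ), (∀ n, IsVal (ρ n)) →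
      (∀ n τ₀, Γ[n]? = some τ₀ → HasTy σ Δ (ρ n) τ₀) →
      HasTy σ Δ (t.subst ρ) τ := by
  induction h with
  | var Γ n τ hn => exact fun Δ ρ hv hρ => hρ n τ hn
  | unit => exact fun _ _ _ _ => .unit
  | pair hv1 hv2 _ _ ih1 ih2 =>
      exact fun Δ ρ hv hρ => .pair (isVal_subst hv1 ρ hv) (isVal_subst hv2 ρ hv)
        (ih1 Δ ρ hv hρ) (ih2 Δ ρ hv hρ)
  | fn _ ih =>
      exact fun Δ ρ hv hρ => .fn (ih _ _ (isVal_ups (isVal_ups hv)) (ups_ok (ups_ok hρ)))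
  | con hv0 _ ih => exact fun Δ ρ hv hρ => .con (isVal_subst hv0 ρ hv) (ih Δ ρ hv hρ)
  | atom => exact fun _ _ _ _ => .atom
  | bindv hv1 hv2 _ _ ih1 ih2 =>
      exact fun Δ ρ hv hρ => .bindv (isVal_subst hv1 ρ hv) (isVal_subst hv2 ρ hv)
        (ih1 Δ ρ hv hρ) (ih2 Δ ρ hv hρ)
  | lett _ _ ih1 ih2 =>
      exact fun Δ ρ hv hρ => .lett (ih1 Δ ρ hv hρ) (ih2 _ _ (isVal_ups hv) (ups_ok hρ))
  | fst hv0 _ ih => exact fun Δ ρ hv hρ => .fst (isVal_subst hv0 ρ hv) (ih Δ ρ hv hρ)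
  | snd hv0 _ ih => exact fun Δ ρ hv hρ => .snd (isVal_subst hv0 ρ hv) (ih Δ ρ hv hρ)
  | app hv1 hv2 _ _ ih1 ih2 =>
      exact fun Δ ρ hv hρ => .app (isVal_subst hv1 ρ hv) (isVal_subst hv2 ρ hv)
        (ih1 Δ ρ hv hρ) (ih2 Δ ρ hv hρ)
  | case br hv0 _ _ ihv ihbr =>
      exact fun Δ ρ hv hρ => .case _ (isVal_subst hv0 ρ hv) (ihv Δ ρ hv hρ)
        (fun c hc => ihbr c hc _ _ (isVal_ups hv) (ups_ok hρ))
  | fresh => exact fun _ _ _ _ => .fresh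
  | unbind hv0 _ ih => exact fun Δ ρ hv hρ => .unbind (isVal_subst hv0 ρ hv) (ih Δ ρ hv hρ)
  | obs o args hv0 _ ih =>
      exact fun Δ ρ hv hρ => .obs o _ (fun i => isVal_subst (hv0 i) ρ hv)
        (fun i => ih i Δ ρ hv hρ)

theorem isVal_cons1 {v : Tm σ} (hv : IsVal v) : ∀ n, IsVal (cons1 v n) := by
  intro n; cases n with
  | zero => exact hv
  | succ m => exact .var

theorem hasTy_subst1 {e v : Tm σ} {τ τ' : Ty σ.D} (hv : IsVal v)
    (hvt : HasTy σ [] v τ) (he : HasTy σ [τ] e τ') : HasTy σ [] (e.subst1 v) τ' := by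
  refine hasTy_subst he [] _ (isVal_cons1 hv) ?_
  intro n τ₀ hn
  cases n with
  | zero => simp only [List.getElem?_cons_zero, Option.some_inj] at hn; subst hn; exact hvt
  | succ m => simp at hn

theorem isVal_cons2 {v f : Tm σ} (hv : IsVal v) (hf : IsVal f) :
    ∀ n, IsVal (cons2 v f n) := by
  intro n
  match n with
  | 0 => exact hv
  | 1 => exact hf
  | (m+2) => exact .var

theorem hasTy_subst2 {e v f : Tm σ} {τ τ₁ τ' : Ty σ.D} (hv : IsVal v) (hf : IsVal f)
    (hvt : HasTy σ [] v τ) (hft : HasTy σ [] f τ₁)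
    (he : HasTy σ [τ, τ₁] e τ') : HasTy σ [] (e.subst2 v f) τ' := by
  refine hasTy_subst he [] _ (isVal_cons2 hv hf) ?_
  intro n τ₀ hn
  match n with
  | 0 => simp only [List.getElem?_cons_zero, Option.some_inj] at hn; subst hn; exact hvt
  | 1 =>
      simp only [List.getElem?_cons_succ, List.getElem?_cons_zero, Option.some_inj] at hn
      subst hn; exact hft
  | (m+2) => simp at hn

theorem isVal_mapAtoms {t : Tm σ} (h : IsVal t) : ∀ f, IsVal (t.mapAtoms f) := by
  induction h with
  | var => exact fun _ => .var
  | unit => exact fun _ => .unit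
  | pair _ _ ih1 ih2 => exact fun f => .pair (ih1 f) (ih2 f)
  | fn => exact fun _ => .fn
  | con _ ih => exact fun f => .con (ih f)
  | atom => exact fun _ => .atom
  | bindv _ _ ih1 ih2 => exact fun f => .bindv (ih1 f) (ih2 f)

theorem hasTy_mapAtoms {Γ : List (Ty σ.D)} {t : Tm σ} {τ : Ty σ.D} (h : HasTy σ Γ t τ) :
    ∀ f, HasTy σ Γ (t.mapAtoms f) τ := by
  induction h with
  | var Γ n τ hn => exact fun _ => .var _ _ _ hn
  | unit => exact fun _ => .unit
  | pair hv1 hv2 _ _ ih1 ih2 =>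
      exact fun f => .pair (isVal_mapAtoms hv1 f) (isVal_mapAtoms hv2 f) (ih1 f) (ih2 f)
  | fn _ ih => exact fun f => .fn (ih f)
  | con hv _ ih => exact fun f => .con (isVal_mapAtoms hv f) (ih f)
  | atom => exact fun _ => .atom
  | bindv hv1 hv2 _ _ ih1 ih2 =>
      exact fun f => .bindv (isVal_mapAtoms hv1 f) (isVal_mapAtoms hv2 f) (ih1 f) (ih2 f)
  | lett _ _ ih1 ih2 => exact fun f => .lett (ih1 f) (ih2 f)
  | fst hv _ ih => exact fun f => .fst (isVal_mapAtoms hv f) (ih f)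
  | snd hv _ ih => exact fun f => .snd (isVal_mapAtoms hv f) (ih f)
  | app hv1 hv2 _ _ ih1 ih2 =>
      exact fun f => .app (isVal_mapAtoms hv1 f) (isVal_mapAtoms hv2 f) (ih1 f) (ih2 f)
  | case br hv _ _ ihv ihbr =>
      exact fun f => .case _ (isVal_mapAtoms hv f) (ihv f) (fun c hc => ihbr c hc f)
  | fresh => exact fun _ => .fresh
  | unbind hv _ ih => exact fun f => .unbind (isVal_mapAtoms hv f) (ih f)
  | obs o args hv _ ih =>
      exact fun f => .obs o _ (fun i => isVal_mapAtoms (hv i) f) (fun i => ih i f)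

theorem atoms_mapAtoms (t : Tm σ) (f : Atom → Atom) :
    (t.mapAtoms f).atoms = t.atoms.image f := by
  induction t <;>
    simp [Tm.mapAtoms, Tm.atoms, Finset.image_union, Finset.biUnion_image, *]

theorem hasTy_numeral (σ : Sig) (n : ℕ) : HasTy σ [] (numeral σ n) (Ty.data σ.natD) := by
  induction n with
  | zero =>
      have h : HasTy σ [] (Tm.con σ.zeroC Tm.unit) (Ty.data (σ.resTy σ.zeroC)) :=
        .con .unit (by rw [σ.zeroArg]; exact .unit)
      rw [σ.zeroRes] at h
      exact h
  | succ m ih =>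
      have hv : IsVal (numeral σ m) := by
        clear ih
        induction m with
        | zero => exact .con .unit
        | succ k ihk => exact .con ihk
      have h : HasTy σ [] (Tm.con σ.succC (numeral σ m)) (Ty.data (σ.resTy σ.succC)) :=
        .con hv (by rw [σ.succArg]; exact ih)
      rw [σ.succRes] at h
      exact h

theorem atoms_numeral (σ : Sig) (n : ℕ) : (numeral σ n).atoms = ∅ := by
  induction n <;> simp [numeral, Tm.atoms, *]

end PreservationAux

/-- Type Safety: Preservation. -/
theorem preservation (σ : Sig) (w : Finset Atom) (c : Config σ) (τ : Ty σ.D)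
    (h : ConfigTy σ w c τ) (c' : Config σ) (hstep : Step σ c c') :
    w ⊆ c'.st.toFinset ∧ ConfigTy σ c'.st.toFinset c' τ := by
  cases hstep with
  | @pop v s S e hv =>
      obtain ⟨hnd, hsub, hw, τ', hS, he⟩ := h
      subst hw
      cases hS with
      | cons he2 hS' =>
        refine ⟨subset_refl _, hnd, ?_, rfl, _, hS', hasTy_subst1 hv he he2⟩
        intro x hx
        rcases Finset.mem_union.1 hx with hx | hx
        · exact hsub (by simp [Stk.atoms]; tauto)
        · rcases Finset.mem_union.1 (atoms_subst1 e v hx) with hx | hx <;>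
            exact hsub (by simp [Stk.atoms, Tm.atoms]; tauto)
  | @lett s S e₁ e₂ =>
      obtain ⟨hnd, hsub, hw, τ', hS, he⟩ := h
      subst hw
      cases he with
      | lett h1 h2 =>
        refine ⟨subset_refl _, hnd, ?_, rfl, _, .cons h2 hS, h1⟩
        intro x hx
        exact hsub (by simp [Stk.atoms, Tm.atoms] at hx ⊢; tauto)
  | @case v s S c0 br hv =>
      obtain ⟨hnd, hsub, hw, τ', hS, he⟩ := h
      subst hw
      cases he with
      | case _ hvv hcon hbr =>
        cases hcon with
        | con hv' hvt =>
          refine ⟨subset_refl _, hnd, ?_, rfl, _, hS, hasTy_subst1 hv hvt (hbr c0 rfl)⟩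
          intro x hx
          rcases Finset.mem_union.1 hx with hx | hx
          · exact hsub (by simp [Stk.atoms]; tauto)
          · rcases Finset.mem_union.1 (atoms_subst1 (br c0) v hx) with hx | hx
            · refine hsub (Finset.mem_union_right _ ?_)
              show x ∈ Tm.atoms (Tm.case (Tm.con c0 v) br)
              exact Finset.mem_union_right _
                (Finset.mem_biUnion.2 ⟨c0, Finset.mem_univ c0, hx⟩)
            · exact hsub (by simp [Stk.atoms, Tm.atoms]; tauto)
  | @fst v₁ v₂ s S hv1 hv2 =>
      obtain ⟨hnd, hsub, hw, τ', hS, he⟩ := h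
      subst hw
      cases he with
      | fst _ hp =>
        cases hp with
        | pair _ _ h1 h2 =>
          refine ⟨subset_refl _, hnd, ?_, rfl, _, hS, h1⟩
          intro x hx
          exact hsub (by simp [Stk.atoms, Tm.atoms] at hx ⊢; tauto)
  | @snd v₁ v₂ s S hv1 hv2 =>
      obtain ⟨hnd, hsub, hw, τ', hS, he⟩ := h
      subst hw
      cases he with
      | snd _ hp =>
        cases hp with
        | pair _ _ h1 h2 =>
          refine ⟨subset_refl _, hnd, ?_, rfl, _, hS, h2⟩
          intro x hx
          exact hsub (by simp [Stk.atoms, Tm.atoms] at hx ⊢; tauto)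
  | @app v s S e hv =>
      obtain ⟨hnd, hsub, hw, τ', hS, he⟩ := h
      subst hw
      cases he with
      | app _ _ hfn harg =>
        cases hfn with
        | fn he' =>
          refine ⟨subset_refl _, hnd, ?_, rfl, _, hS,
            hasTy_subst2 hv .fn harg (.fn he') he'⟩
          intro x hx
          rcases Finset.mem_union.1 hx with hx | hx
          · exact hsub (by simp [Stk.atoms]; tauto)
          · rcases Finset.mem_union.1 (atoms_subst2 e v (Tm.fn e) hx) with hx | hx
            · exact hsub (by simp [Stk.atoms, Tm.atoms]; tauto)
            · rcases Finset.mem_union.1 hx with hx | hx <;>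
                exact hsub (by simp [Stk.atoms, Tm.atoms]; tauto)
  | @fresh s a' S ha' =>
      obtain ⟨hnd, hsub, hw, τ', hS, he⟩ := h
      subst hw
      cases he with
      | fresh =>
        constructor
        · intro x hx
          simp only [List.mem_toFinset, List.mem_append] at *
          exact Or.inl hx
        refine ⟨?_, ?_, rfl, _, hS, .atom⟩
        · refine List.Nodup.append hnd (List.nodup_singleton a') ?_
          intro x hx hx'
          simp only [List.mem_singleton] at hx'
          subst hx'
          exact ha' hx
        · intro x hx
          simp only [List.mem_toFinset, List.mem_append, List.mem_singleton]
          rcases Finset.mem_union.1 hx with hx | hx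
          · exact Or.inl (List.mem_toFinset.1
              (hsub (Finset.mem_union_left _ hx)))
          · simp only [Tm.atoms, Finset.mem_singleton] at hx
            exact Or.inr hx
  | @unbind s a' v S a ha' hv =>
      obtain ⟨hnd, hsub, hw, τ', hS, he⟩ := h
      subst hw
      cases he with
      | unbind _ hbnd =>
        cases hbnd with
        | bindv _ _ _ hvt =>
          constructor
          · intro x hx
            simp only [List.mem_toFinset, List.mem_append] at *
            exact Or.inl hx
          refine ⟨?_, ?_, rfl, _, hS,
            .pair .atom (isVal_mapAtoms hv _) .atom (hasTy_mapAtoms hvt _)⟩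
          · refine List.Nodup.append hnd (List.nodup_singleton a') ?_
            intro x hx hx'
            simp only [List.mem_singleton] at hx'
            subst hx'
            exact ha' hx
          · intro x hx
            simp only [List.mem_toFinset, List.mem_append, List.mem_singleton]
            rcases Finset.mem_union.1 hx with hx | hx
            · exact Or.inl (List.mem_toFinset.1
                (hsub (Finset.mem_union_left _ hx)))
            · simp only [Tm.atoms, Finset.mem_union, Finset.mem_singleton] at hx
              rcases hx with hx | hx
              · exact Or.inr hx
              · rw [Tm.renameAtom, atoms_mapAtoms] at hx
                rcases Finset.mem_image.1 hx with ⟨b, hb, hbx⟩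
                by_cases hba : b = a
                · subst hbx; simp [hba]
                · subst hbx
                  simp only [hba, if_false]
                  refine Or.inl (List.mem_toFinset.1 (hsub ?_))
                  refine Finset.mem_union_right _ ?_
                  show b ∈ Tm.atoms (Tm.unbind (Tm.bindv (Tm.atom a) v))
                  simp [Tm.atoms, hb]
  | @obs s S o as hin =>
      obtain ⟨hnd, hsub, hw, τ', hS, he⟩ := h
      subst hw
      cases he with
      | obs _ _ _ _ =>
        refine ⟨subset_refl _, hnd, ?_, rfl, _, hS, hasTy_numeral σ _⟩
        intro x hx
        rcases Finset.mem_union.1 hx with hx | hx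
        · exact hsub (by simp [Stk.atoms]; tauto)
        · rw [atoms_numeral] at hx
          exact absurd hx (Finset.notMem_empty x)
end

section
/- (Some/any property of fresh atoms) If ⟨s, S, fresh()⟩↓ⁿ⁺¹ with atom(S) ⊆ atom(s), then for ALL a' ∉ atom(s), ⟨s⊕a', S, a'⟩↓ⁿ. Similarly, if ⟨s, S, unbind ⟨⟨a⟩⟩v⟩↓ⁿ⁺¹ with atom(S) ∪ atom(a,v) ⊆ atom(s), then for ALL a' ∉ atom(s), ⟨s⊕a', S, (a', v[a:=a'])⟩↓ⁿ. -/
set_option autoImplicit true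

/-!
Termination is equivariant: a finite permutation of atoms applied to a configuration whose
state has no repetitions maps each transition to a transition, because observations are
equivariant. The atom chosen by the first `fresh()` or `unbind` step and any other atom
outside the state are exchanged by a swap fixing the state, the frame stack and the
unbound value, so that step can be replayed with any fresh atom.
-/

namespace Tm

variable {σ : Sig}

lemma isVal_mapAtoms {v : Tm σ} (h : IsVal v) (f : Atom → Atom) :
    IsVal (v.mapAtoms f) := by
  induction h <;> simp only [mapAtoms] <;> constructor <;> assumption

lemma mapAtoms_renV (t : Tm σ) (r : ℕ → ℕ) (f : Atom → Atom) :
    (t.renV r).mapAtoms f = (t.mapAtoms f).renV r := by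
  induction t generalizing r <;> simp_all [renV, mapAtoms]

lemma mapAtoms_ups (ρ : ℕ → Tm σ) (f : Atom → Atom) :
    (fun n => (ups ρ n).mapAtoms f) = ups (fun n => (ρ n).mapAtoms f) := by
  funext n
  cases n <;> simp [ups, mapAtoms, mapAtoms_renV]

lemma mapAtoms_subst (t : Tm σ) (ρ : ℕ → Tm σ) (f : Atom → Atom) :
    (t.subst ρ).mapAtoms f = (t.mapAtoms f).subst (fun n => (ρ n).mapAtoms f) := by
  induction t generalizing ρ <;> simp_all [subst, mapAtoms, mapAtoms_ups]

lemma mapAtoms_subst1 (e v : Tm σ) (f : Atom → Atom) :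
    (e.subst1 v).mapAtoms f = (e.mapAtoms f).subst1 (v.mapAtoms f) := by
  rw [subst1, subst1, mapAtoms_subst]
  congr 1
  funext n
  cases n <;> rfl

lemma mapAtoms_subst2 (e v g : Tm σ) (f : Atom → Atom) :
    (e.subst2 v g).mapAtoms f = (e.mapAtoms f).subst2 (v.mapAtoms f) (g.mapAtoms f) := by
  rw [subst2, subst2, mapAtoms_subst]
  congr 1
  funext n
  rcases n with _ | _ | n <;> rfl

lemma mapAtoms_mapAtoms (t : Tm σ) (f g : Atom → Atom) :
    (t.mapAtoms f).mapAtoms g = t.mapAtoms (g ∘ f) := by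
  induction t <;> simp_all [mapAtoms]

lemma mapAtoms_congr {f g : Atom → Atom} (t : Tm σ)
    (h : ∀ a ∈ t.atoms, f a = g a) : t.mapAtoms f = t.mapAtoms g := by
  induction t <;> simp_all [mapAtoms, atoms] <;> aesop

lemma mapAtoms_eq_self {f : Atom → Atom} (t : Tm σ)
    (h : ∀ a ∈ t.atoms, f a = a) : t.mapAtoms f = t := by
  induction t <;> simp_all [mapAtoms, atoms] <;> aesop

lemma mapAtoms_renameAtom {f : Atom → Atom} (hf : f.Injective) (v : Tm σ) (a a' : Atom) :
    (v.renameAtom a a').mapAtoms f = (v.mapAtoms f).renameAtom (f a) (f a') := by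
  simp only [renameAtom, mapAtoms_mapAtoms]
  congr 1
  funext b
  by_cases hb : b = a <;> simp [hb, hf.ne_iff]

lemma renameAtom_mapAtoms_swap {v : Tm σ} {a₀ a' : Atom} (a : Atom)
    (h₀ : a₀ ∉ v.atoms) (h' : a' ∉ v.atoms) :
    (v.renameAtom a a₀).mapAtoms (Equiv.swap a₀ a') = v.renameAtom a a' := by
  rw [renameAtom, renameAtom, mapAtoms_mapAtoms]
  refine mapAtoms_congr v fun b hb => ?_
  have hb₀ : b ≠ a₀ := by rintro rfl; exact h₀ hb
  have hb' : b ≠ a' := by rintro rfl; exact h' hb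
  by_cases hba : b = a <;> simp [hba, Equiv.swap_apply_of_ne_of_ne, hb₀, hb']

end Tm

lemma Stk.mapAtoms_eq_self {σ : Sig} {f : Atom → Atom} (S : Stk σ)
    (h : ∀ a ∈ S.atoms, f a = a) : S.mapAtoms f = S := by
  induction S with
  | id => rfl
  | cons S e ih =>
    simp only [Stk.atoms, Finset.mem_union] at h
    rw [Stk.mapAtoms, ih fun a ha => h a (Or.inl ha),
      Tm.mapAtoms_eq_self e fun a ha => h a (Or.inr ha)]

lemma numeral_mapAtoms (σ : Sig) (m : ℕ) (f : Atom → Atom) :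
    (numeral σ m).mapAtoms f = numeral σ m := by
  induction m <;> simp_all [numeral, Tm.mapAtoms]

lemma Equiv.swap_support_finite {α : Type*} [DecidableEq α] (a b : α) :
    {x | Equiv.swap a b x ≠ x}.Finite :=
  (Set.toFinite {a, b}).subset fun x hx => by
    rcases Equiv.swap_apply_ne_self_iff.1 hx with ⟨-, rfl | rfl⟩ <;> simp

lemma List.map_swap_eq_self {α : Type*} [DecidableEq α] {s : List α} {a b : α}
    (ha : a ∉ s) (hb : b ∉ s) :
    s.map (Equiv.swap a b) = s :=
  (List.map_congr_left fun x hx => Equiv.swap_apply_of_ne_of_ne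
    (by rintro rfl; exact ha hx) (by rintro rfl; exact hb hx)).trans s.map_id

namespace Config

variable {σ : Sig}

def mapAtoms (c : Config σ) (f : Atom → Atom) : Config σ :=
  ⟨c.st.map f, c.stk.mapAtoms f, c.tm.mapAtoms f⟩

end Config

namespace Step

variable {σ : Sig} {c c' : Config σ}

lemma nodup (h : Step σ c c') (hc : c.st.Nodup) : c'.st.Nodup := by
  cases h with
  | fresh ha' | unbind ha' => simpa using hc.concat ha'
  | _ => exact hc

lemma mapAtoms (hequiv : ObsEquivariant σ) {π : Equiv.Perm Atom}
    (hπ : {a | π a ≠ a}.Finite) (h : Step σ c c') (hc : c.st.Nodup) :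
    Step σ (c.mapAtoms π) (c'.mapAtoms π) := by
  have hfresh {s : List Atom} {a'} (ha' : a' ∉ s) : π a' ∉ s.map π := by
    simpa using ha'
  cases h with
  | pop hv =>
    simp only [Config.mapAtoms, Stk.mapAtoms, Tm.mapAtoms_subst1]
    exact pop (Tm.isVal_mapAtoms hv _)
  | lett => exact lett
  | case br hv =>
    simp only [Config.mapAtoms, Tm.mapAtoms, Tm.mapAtoms_subst1]
    exact case _ (Tm.isVal_mapAtoms hv _)
  | fst hv₁ hv₂ => exact fst (Tm.isVal_mapAtoms hv₁ _) (Tm.isVal_mapAtoms hv₂ _)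
  | snd hv₁ hv₂ => exact snd (Tm.isVal_mapAtoms hv₁ _) (Tm.isVal_mapAtoms hv₂ _)
  | app hv =>
    simp only [Config.mapAtoms, Tm.mapAtoms, Tm.mapAtoms_subst2]
    exact app (Tm.isVal_mapAtoms hv _)
  | fresh ha' =>
    simp only [Config.mapAtoms, Tm.mapAtoms, List.map_append, List.map_singleton]
    exact fresh (hfresh ha')
  | unbind ha' hv =>
    simp only [Config.mapAtoms, Tm.mapAtoms, List.map_append, List.map_singleton,
      Tm.mapAtoms_renameAtom π.injective]
    exact unbind (hfresh ha') (Tm.isVal_mapAtoms hv _)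
  | @obs s S o as has =>
    have hval : σ.obsVal o s (List.ofFn as) = σ.obsVal o (s.map π) (List.ofFn (π ∘ as)) := by
      rw [← List.map_ofFn]
      exact hequiv π hπ o s _ hc (by simp) (by simpa using has)
    simp only [Config.mapAtoms, Tm.mapAtoms, numeral_mapAtoms, hval]
    exact obs o (π ∘ as) fun i => List.mem_map_of_mem (has i)

end Step

lemma TermN.mapAtoms {σ : Sig} (hequiv : ObsEquivariant σ) {π : Equiv.Perm Atom}
    (hπ : {a | π a ≠ a}.Finite) {c : Config σ} {n : ℕ} (h : TermN σ c n)
    (hc : c.st.Nodup) : TermN σ (c.mapAtoms π) n := by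
  induction h with
  | val hv => exact val (Tm.isVal_mapAtoms hv _)
  | step hstep _ ih => exact step (hstep.mapAtoms hequiv hπ hc) (ih (hstep.nodup hc))

lemma TermN.swap_last_atom {σ : Sig} (hequiv : ObsEquivariant σ) {s : List Atom} {S : Stk σ}
    {e : Tm σ} {n : ℕ} {a₀ a' : Atom} (hs : s.Nodup) (hS : S.atoms ⊆ s.toFinset)
    (ha₀ : a₀ ∉ s) (ha' : a' ∉ s) (h : TermN σ ⟨s ++ [a₀], S, e⟩ n) :
    TermN σ ⟨s ++ [a'], S, e.mapAtoms (Equiv.swap a₀ a')⟩ n := by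
  have hfix : S.mapAtoms (Equiv.swap a₀ a') = S :=
    S.mapAtoms_eq_self fun b hb => by
      have hb : b ∈ s := List.mem_toFinset.1 (hS hb)
      exact Equiv.swap_apply_of_ne_of_ne (by rintro rfl; exact ha₀ hb)
        (by rintro rfl; exact ha' hb)
  simpa [Config.mapAtoms, List.map_swap_eq_self ha₀ ha', hfix] using
    h.mapAtoms hequiv (Equiv.swap_support_finite a₀ a') (by simpa using hs.concat ha₀)

/-- Some/any property of fresh atoms. -/
theorem fresh_some_any (σ : Sig) (hequiv : ObsEquivariant σ) :
    (∀ (s : List Atom) (S : Stk σ) (n : ℕ), s.Nodup →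
      S.atoms ⊆ s.toFinset →
      TermN σ ⟨s, S, Tm.fresh⟩ (n + 1) →
      ∀ a' : Atom, a' ∉ s → TermN σ ⟨s ++ [a'], S, Tm.atom a'⟩ n) ∧
    (∀ (s : List Atom) (S : Stk σ) (a : Atom) (v : Tm σ) (n : ℕ), s.Nodup →
      IsVal v → S.atoms ∪ insert a v.atoms ⊆ s.toFinset →
      TermN σ ⟨s, S, Tm.unbind (Tm.bindv (Tm.atom a) v)⟩ (n + 1) →
      ∀ a' : Atom, a' ∉ s →
        TermN σ ⟨s ++ [a'], S, Tm.pair (Tm.atom a') (v.renameAtom a a')⟩ n) := by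
  constructor
  · intro s S n hs hS hterm a' ha'
    rcases hterm with _ | ⟨hstep, hrest⟩
    cases hstep with
    | pop hv => nomatch hv
    | fresh ha₀ => simpa [Tm.mapAtoms] using hrest.swap_last_atom hequiv hs hS ha₀ ha'
  · intro s S a v n hs _ hsub hterm a' ha'
    rcases hterm with _ | ⟨hstep, hrest⟩
    cases hstep with
    | pop hv => nomatch hv
    | unbind ha₀ =>
      have hS : S.atoms ⊆ s.toFinset := fun b hb => hsub (Finset.mem_union_left _ hb)
      have hv : v.atoms ⊆ s.toFinset := fun b hb => hsub (by simp [hb])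
      have hfresh {b} (hb : b ∉ s) : b ∉ v.atoms := fun h => hb (List.mem_toFinset.1 (hv h))
      simpa [Tm.mapAtoms, Tm.renameAtom_mapAtoms_swap a (hfresh ha₀) (hfresh ha')] using
        hrest.swap_last_atom hequiv hs hS ha₀ ha'
end
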